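/- arXiv:2012.13334 — 4 statements merged into one kernel-verified Lean document; each statement's English description precedes it below -/
import Mathlib

section
/- Let φ, F : ℝ → ℝ be smooth with φ > 0, satisfying φφ'F' = λ - φφ'' - (n-2)(φ')² with λ ≤ 0 and n ≥ 3, and suppose the scalar curvature expression R = ((n-1)/φ²)(λ - 2φφ'') - (n-1)(n-2)(φ'/φ)² is nonnegative everywhere. Then φ'' ≤ 0 everywhere, and hence φ is constant. -/
/-- Claim 3 of the paper: if the warped-product steady soliton ODE holds with
Einstein constant λ ≤ 0 and the scalar curvature expression is nonnegative,
then φ'' ≤ 0 everywhere; hence the positive function φ is constant. -/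
theorem stmt_12 {n : ℕ} (hn : 3 ≤ n) (lam : ℝ) (hlam : lam ≤ 0)
    (φ F : ℝ → ℝ) (hφ : ContDiff ℝ (⊤ : ℕ∞) φ) (hF : ContDiff ℝ (⊤ : ℕ∞) F)
    (hpos : ∀ r, 0 < φ r)
    (hODE : ∀ r, φ r * deriv φ r * deriv F r =
      lam - φ r * deriv (deriv φ) r - ((n : ℝ) - 2) * (deriv φ r) ^ 2)
    (hR : ∀ r, 0 ≤ (((n : ℝ) - 1) / (φ r) ^ 2) * (lam - 2 * φ r * deriv (deriv φ) r)
      - ((n : ℝ) - 1) * ((n : ℝ) - 2) * (deriv φ r / φ r) ^ 2) :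
    (∀ r, deriv (deriv φ) r ≤ 0) ∧ (∀ r s : ℝ, φ r = φ s) := by
  have hn3 : (3 : ℝ) ≤ (n : ℝ) := by exact_mod_cast hn
  -- Step 1: φ'' ≤ 0
  have hφ'' : ∀ r, deriv (deriv φ) r ≤ 0 := by
    intro r
    have hp := hpos r
    have h := hR r
    rw [div_pow] at h
    have hkey : 0 ≤ (((n : ℝ) - 1) / (φ r) ^ 2) *
        ((lam - 2 * φ r * deriv (deriv φ) r) - ((n : ℝ) - 2) * (deriv φ r) ^ 2) := by
      have : (((n : ℝ) - 1) / (φ r) ^ 2) *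
          ((lam - 2 * φ r * deriv (deriv φ) r) - ((n : ℝ) - 2) * (deriv φ r) ^ 2)
          = (((n : ℝ) - 1) / (φ r) ^ 2) * (lam - 2 * φ r * deriv (deriv φ) r)
            - ((n : ℝ) - 1) * ((n : ℝ) - 2) * ((deriv φ r) ^ 2 / (φ r) ^ 2) := by
        field_simp
      rw [this]; exact h
    have hc : 0 < ((n : ℝ) - 1) / (φ r) ^ 2 := by
      apply div_pos (by linarith) (by positivity)
    have h2 : 0 ≤ (lam - 2 * φ r * deriv (deriv φ) r) - ((n : ℝ) - 2) * (deriv φ r) ^ 2 :=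
      nonneg_of_mul_nonneg_right hkey hc
    by_contra hcon
    push_neg at hcon
    nlinarith [mul_pos hp hcon, sq_nonneg (deriv φ r)]
  -- differentiability facts
  have hdiff : Differentiable ℝ φ := hφ.differentiable (by simp)
  have hdiff' : Differentiable ℝ (deriv φ) :=
    ((contDiff_infty_iff_deriv.mp (hφ.of_le (by exact_mod_cast le_top))).2).differentiable
      (by simp)
  have hanti : Antitone (deriv φ) :=
    antitone_of_deriv_nonpos hdiff' hφ''
  -- Step 2: deriv φ = 0 everywhere
  have hzero : ∀ a, deriv φ a = 0 := by
    intro a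
    rcases lt_trichotomy (deriv φ a) 0 with hneg | h0 | hposd
    · exfalso
      have h1 : φ a / deriv φ a < 0 := div_neg_of_pos_of_neg (hpos a) hneg
      have hay : a ≤ a - φ a / deriv φ a := by linarith
      have hb := (convex_Ici a).image_sub_le_mul_sub_of_deriv_le
        hdiff.continuous.continuousOn hdiff.differentiableOn
        (C := deriv φ a)
        (fun t ht => hanti (le_of_lt (show a < t by simpa [interior_Ici] using ht)))
        a (Set.mem_Ici.mpr le_rfl) (a - φ a / deriv φ a) (by simpa using hay) hay
      have hcy : deriv φ a * (a - φ a / deriv φ a - a) = -φ a := by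
        field_simp [hneg.ne]; ring
      rw [hcy] at hb
      linarith [hpos (a - φ a / deriv φ a)]
    · exact h0
    · exfalso
      have h1 : 0 < φ a / deriv φ a := div_pos (hpos a) hposd
      have hxa : a - φ a / deriv φ a ≤ a := by linarith
      have hb := (convex_Iic a).mul_sub_le_image_sub_of_le_deriv
        hdiff.continuous.continuousOn hdiff.differentiableOn
        (C := deriv φ a)
        (fun t ht => hanti (le_of_lt (show t < a by simpa [interior_Iic] using ht)))
        (a - φ a / deriv φ a) (by simpa using hxa) a (Set.mem_Iic.mpr le_rfl) hxa
      have hcx : deriv φ a * (a - (a - φ a / deriv φ a)) = φ a := by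
        field_simp [hposd.ne']; ring
      rw [hcx] at hb
      linarith [hpos (a - φ a / deriv φ a)]
  refine ⟨hφ'', fun r s => ?_⟩
  exact is_const_of_deriv_eq_zero hdiff hzero r s
end

section
/- If φ : ℝ → (0,∞) and F : ℝ → ℝ are smooth and satisfy φφ'F' = λ - φφ'' - (n-2)(φ')² with λ > 0, n ≥ 3, and the quantity ((n-1)/φ²)(λ - 2φφ'') - (n-1)(n-2)(φ'/φ)² is nonnegative everywhere, then φ' never vanishes. -/
/-- If the warped-product steady soliton ODE holds with Einstein constant λ > 0
and the scalar curvature expression is nonnegative everywhere, then φ' never vanishes. -/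
theorem stmt_13 {n : ℕ} (hn : 3 ≤ n) (lam : ℝ) (hlam : 0 < lam)
    (φ F : ℝ → ℝ) (hφ : ContDiff ℝ (⊤ : ℕ∞) φ) (hF : ContDiff ℝ (⊤ : ℕ∞) F)
    (hpos : ∀ r, 0 < φ r)
    (hODE : ∀ r, φ r * deriv φ r * deriv F r =
      lam - φ r * deriv (deriv φ) r - ((n : ℝ) - 2) * (deriv φ r) ^ 2)
    (hR : ∀ r, 0 ≤ (((n : ℝ) - 1) / (φ r) ^ 2) * (lam - 2 * φ r * deriv (deriv φ) r)
      - ((n : ℝ) - 1) * ((n : ℝ) - 2) * (deriv φ r / φ r) ^ 2) :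
    ∀ r, deriv φ r ≠ 0 := by
  intro r h
  have hO := hODE r
  have hRr := hR r
  rw [h] at hO hRr
  have hp := hpos r
  have hn' : (3 : ℝ) ≤ (n : ℝ) := by exact_mod_cast hn
  have heq : φ r * deriv (deriv φ) r = lam := by nlinarith
  have hφ2 : 0 < (φ r) ^ 2 := by positivity
  rw [mul_assoc 2, heq] at hRr
  have h2 : lam - 2 * lam = -lam := by ring
  rw [h2, div_mul_eq_mul_div] at hRr
  simp at hRr
  have hd : (0:ℝ) < ((n:ℝ) - 1) * lam / φ r ^ 2 := div_pos (by nlinarith) hφ2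
  rw [neg_div] at hRr
  linarith
end

section
/- If D_{ijk} = 0 for a gradient Ricci soliton, then at any point where ∇f ≠ 0, both the trace-free part of the second fundamental form of the level surface {f = c} vanishes (h_{ab} = (H/(n-1))g_{ab}) and the scalar curvature R is constant along the level surface, by the key norm identity |D|² = (2|∇f|⁴/(n-2)²)|h_{ab} - (H/(n-1))g_{ab}|² + (1/(2(n-1)(n-2)))|∇_aR|². -/
open scoped BigOperators

/-- If D = 0 on a gradient Ricci soliton then, at a point where ∇f ≠ 0, the level
surface of f is totally umbilical (h_{ab} = (H/(n-1))g_{ab}) and R is constant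
along it (its tangential derivative vanishes), by the key identity
|D|² = (2|∇f|⁴/(n-2)²)|h_{ab} - (H/(n-1))g_{ab}|² + (1/(2(n-1)(n-2)))|∇ₐR|²,
written in an orthonormal frame e₂,…,eₙ tangent to the level surface. -/
theorem stmt_15 {n : ℕ} (hn : 3 ≤ n)
    (gradnorm : ℝ) (hgradpos : 0 < gradnorm)
    (h g2 : Fin (n - 1) → Fin (n - 1) → ℝ) (H : ℝ)
    (dRtan : Fin (n - 1) → ℝ) (normDsq : ℝ)
    (horth : ∀ a b, g2 a b = if a = b then (1 : ℝ) else 0)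
    (hid : normDsq =
      (2 * gradnorm ^ 4 / ((n : ℝ) - 2) ^ 2) *
        (∑ a, ∑ b, (h a b - (H / ((n : ℝ) - 1)) * g2 a b) ^ 2)
      + (1 / (2 * ((n : ℝ) - 1) * ((n : ℝ) - 2))) * ∑ a, (dRtan a) ^ 2)
    (hD : normDsq = 0) :
    (∀ a b, h a b = (H / ((n : ℝ) - 1)) * g2 a b) ∧ (∀ a, dRtan a = 0) := by
  have hn2 : (0:ℝ) < (n:ℝ) - 2 := by
    have : (3:ℝ) ≤ (n:ℝ) := by exact_mod_cast hn
    linarith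
  have hn1 : (0:ℝ) < (n:ℝ) - 1 := by linarith
  have c1 : 0 < 2 * gradnorm ^ 4 / ((n : ℝ) - 2) ^ 2 := by positivity
  have c2 : 0 < 1 / (2 * ((n : ℝ) - 1) * ((n : ℝ) - 2)) := by positivity
  set S1 := ∑ a, ∑ b, (h a b - (H / ((n : ℝ) - 1)) * g2 a b) ^ 2 with hS1
  set S2 := ∑ a, (dRtan a) ^ 2 with hS2
  have hS1n : 0 ≤ S1 := Finset.sum_nonneg fun a _ =>
    Finset.sum_nonneg fun b _ => sq_nonneg _
  have hS2n : 0 ≤ S2 := Finset.sum_nonneg fun a _ => sq_nonneg _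
  have key : 0 = (2 * gradnorm ^ 4 / ((n : ℝ) - 2) ^ 2) * S1
      + (1 / (2 * ((n : ℝ) - 1) * ((n : ℝ) - 2))) * S2 := by
    rw [← hD, hid]
  have hS1z : S1 = 0 := by nlinarith [mul_nonneg c1.le hS1n, mul_nonneg c2.le hS2n]
  have hS2z : S2 = 0 := by nlinarith [mul_nonneg c1.le hS1n, mul_nonneg c2.le hS2n]
  constructor
  · intro a b
    have := (Finset.sum_eq_zero_iff_of_nonneg
      (fun a _ => Finset.sum_nonneg fun b _ => sq_nonneg _)).mp hS1z a (Finset.mem_univ a)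
    have := (Finset.sum_eq_zero_iff_of_nonneg
      (fun b _ => sq_nonneg _)).mp this b (Finset.mem_univ b)
    have := pow_eq_zero_iff (n := 2) (by norm_num) |>.mp this
    linarith
  · intro a
    have := (Finset.sum_eq_zero_iff_of_nonneg
      (fun a _ => sq_nonneg _)).mp hS2z a (Finset.mem_univ a)
    exact pow_eq_zero_iff (n := 2) (by norm_num) |>.mp this
end

section
/- For n ≥ 4, the Bach tensor of a gradient Ricci soliton satisfies B_{ij} = -(1/(n-2))(∇ₖD_{ikj} + ((n-3)/(n-2))C_{jli}∇ₗf); in particular, if D_{ijk} = 0 and C_{ijk} = 0 then the Bach tensor vanishes. -/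
open scoped BigOperators

/-- Partial derivative of a scalar function in the i-th coordinate direction. -/
noncomputable def pd {n : ℕ} (f : EuclideanSpace ℝ (Fin n) → ℝ)
    (x : EuclideanSpace ℝ (Fin n)) (i : Fin n) : ℝ :=
  fderiv ℝ f x (EuclideanSpace.single i 1)

/-- For n ≥ 4, the Bach tensor of a gradient Ricci soliton Ric + Hess f = ρg
satisfies B_{ij} = -(1/(n-2))(∇ₖD_{ikj} + ((n-3)/(n-2))C_{jli}∇ₗf); in
particular, if D = 0 and C = 0 then the Bach tensor vanishes.  Components (in an
orthonormal frame) are functions of the point x: `uf x l` = ∇ₗf, `covC`/`covW`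
the covariant derivatives of the Cotton and Weyl tensors (last index the
derivative index), `covD x i j k m` = ∇ₘD_{ijk} given by the coordinate formula,
and the hypotheses encode the definition of the Bach tensor, the Leibniz rule for
∇D = ∇C + ∇W·∇f + W·Hess f combined with the soliton equation Hess f = ρg - Ric,
the divergence relation C_{ijk} = -((n-2)/(n-3))∇ₗW_{ijkl}, the symmetries of
∇W and ∇C, the trace-free property of the Weyl tensor, and the symmetry of Ric. -/
theorem stmt_19 {n : ℕ} (hn : 4 ≤ n) (ρ : ℝ)
    (Ric B : EuclideanSpace ℝ (Fin n) → Fin n → Fin n → ℝ)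
    (C D : EuclideanSpace ℝ (Fin n) → Fin n → Fin n → Fin n → ℝ)
    (W : EuclideanSpace ℝ (Fin n) → Fin n → Fin n → Fin n → Fin n → ℝ)
    (covC : EuclideanSpace ℝ (Fin n) → Fin n → Fin n → Fin n → Fin n → ℝ)
    (covD : EuclideanSpace ℝ (Fin n) → Fin n → Fin n → Fin n → Fin n → ℝ)
    (covW : EuclideanSpace ℝ (Fin n) → Fin n → Fin n → Fin n → Fin n → Fin n → ℝ)
    (uf : EuclideanSpace ℝ (Fin n) → Fin n → ℝ)
    (Γ : EuclideanSpace ℝ (Fin n) → Fin n → Fin n → Fin n → ℝ)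
    (hRicsym : ∀ x i j, Ric x i j = Ric x j i)
    -- D = C + W·∇f
    (hD : ∀ x i j k, D x i j k = C x i j k + ∑ l, W x i j k l * uf x l)
    -- coordinate formula for the covariant derivative of D
    (hcovD : ∀ x i j k m, covD x i j k m =
      pd (fun y => D y i j k) x m
        - ∑ l, Γ x m i l * D x l j k - ∑ l, Γ x m j l * D x i l k
        - ∑ l, Γ x m k l * D x i j l)
    -- Leibniz rule for ∇D together with the soliton equation Hess f = ρg - Ric
    (hLeib : ∀ x i j k m, covD x i j k m = covC x i j k m
      + ∑ l, (covW x i j k l m * uf x l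
          + W x i j k l * (ρ * (if l = m then (1 : ℝ) else 0) - Ric x l m)))
    -- definition of the Bach tensor: B_{ij} = (1/(n-2))(∇ₖC_{kij} + R_{kl}W_{ikjl})
    (hB : ∀ x i j, B x i j = (1 / ((n : ℝ) - 2)) *
      ((∑ k, covC x k i j k) + ∑ k, ∑ l, Ric x k l * W x i k j l))
    -- divergence of the Weyl tensor: C_{ijk} = -((n-2)/(n-3)) ∇ₗW_{ijkl}
    (hdivW : ∀ x i j k, C x i j k =
      -(((n : ℝ) - 2) / ((n : ℝ) - 3)) * ∑ l, covW x i j k l l)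
    -- symmetries of ∇W and ∇C, trace-free Weyl
    (hWpair : ∀ x i j k l m, covW x i j k l m = covW x k l i j m)
    (hWanti : ∀ x i j k l m, covW x i j k l m = -covW x j i k l m)
    (hCanti : ∀ x i j k m, covC x i j k m = -covC x j i k m)
    (hWtr : ∀ x i j, ∑ k, W x i k j k = 0) :
    (∀ x i j, B x i j = -(1 / ((n : ℝ) - 2)) *
      ((∑ k, covD x i k j k) + (((n : ℝ) - 3) / ((n : ℝ) - 2)) *
        ∑ l, C x j l i * uf x l)) ∧
    ((∀ x i j k, D x i j k = 0) → (∀ x i j k, C x i j k = 0) →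
      ∀ x i j, B x i j = 0) := by

  have hn4 : (4:ℝ) ≤ (n:ℝ) := by exact_mod_cast hn
  have hne2 : (n:ℝ) - 2 ≠ 0 := by linarith
  have hne3 : (n:ℝ) - 3 ≠ 0 := by linarith
  -- sum of divergence of Weyl
  have hS : ∀ x j l i, ∑ k, covW x j l i k k = -(((n:ℝ) - 3) / ((n:ℝ) - 2)) * C x j l i := by
    intro x j l i
    have h := hdivW x j l i
    field_simp at h ⊢
    linarith
  have key : ∀ x i j, ∑ k, covD x i k j k
      = -(∑ k, covC x k i j k)
        - (((n:ℝ) - 3) / ((n:ℝ) - 2)) * ∑ l, C x j l i * uf x l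
        - ∑ k, ∑ l, Ric x k l * W x i k j l := by
    intro x i j
    have h1 : ∀ k, covD x i k j k
        = -covC x k i j k + (∑ l, covW x j l i k k * uf x l)
          + (ρ * W x i k j k - ∑ l, Ric x k l * W x i k j l) := by
      intro k
      rw [hLeib, hCanti x i k j k]
      have h2 : ∀ l, covW x i k j l k * uf x l
          + W x i k j l * (ρ * (if l = k then (1:ℝ) else 0) - Ric x l k)
          = covW x j l i k k * uf x l
            + (W x i k j l * (ρ * (if l = k then (1:ℝ) else 0))
              - Ric x k l * W x i k j l) := by
        intro l
        rw [hWpair x i k j l k, hRicsym x k l]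
        ring
      rw [Finset.sum_congr rfl (fun l _ => h2 l)]
      rw [Finset.sum_add_distrib, Finset.sum_sub_distrib]
      have h3 : ∑ l, W x i k j l * (ρ * (if l = k then (1:ℝ) else 0))
          = ρ * W x i k j k := by
        rw [Finset.sum_eq_single k]
        · simp [mul_comm]
        · intro b _ hb; simp [hb]
        · simp
      rw [h3]; ring
    rw [Finset.sum_congr rfl (fun k _ => h1 k)]
    rw [Finset.sum_add_distrib, Finset.sum_add_distrib]
    rw [Finset.sum_comm]
    have h4 : ∑ l, ∑ k, covW x j l i k k * uf x l
        = -(((n:ℝ) - 3) / ((n:ℝ) - 2)) * ∑ l, C x j l i * uf x l := by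
      rw [Finset.mul_sum]
      refine Finset.sum_congr rfl (fun l _ => ?_)
      rw [← Finset.sum_mul, hS x j l i]; ring
    rw [h4, Finset.sum_neg_distrib, Finset.sum_sub_distrib, ← Finset.mul_sum,
      hWtr x i j]
    ring
  constructor
  · intro x i j
    rw [hB, key]
    ring
  · intro hD0 hC0 x i j
    have hcovD0 : ∀ k, covD x i k j k = 0 := by
      intro k
      rw [hcovD]
      have : (fun y => D y i k j) = fun _ => (0:ℝ) := by
        funext y; exact hD0 y i k j
      simp [pd, this, hD0]
    have h := (key x i j)
    rw [hB]
    have h5 : ∑ k, covD x i k j k = 0 := by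
      simp [hcovD0]
    rw [h5] at h
    simp [hC0] at h
    have h6 : (∑ k, covC x k i j k) + ∑ k, ∑ l, Ric x k l * W x i k j l = 0 := by
      linarith
    rw [h6, mul_zero]
end
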